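/- Let K/ℚ be a finite Galois extension with group G, let K' be the fixed field of the commutator subgroup G' of G, and suppose K' ⊆ ℚ(ζ_m) for a positive integer m. Then for every positive integer q, K ∩ ℚ(ζ_{qm}) = K', and [K(ζ_{qm}) : ℚ] = φ(qm)·[K:ℚ]/[K':ℚ]. -/

import Mathlib

open IntermediateField

/-- The cyclotomic field `ℚ(ζ_q)` inside `ℂ`, generated by `e^{2πi/q}`. -/
noncomputable def cycloField (q : ℕ) : IntermediateField ℚ ℂ :=
  IntermediateField.adjoin ℚ {Complex.exp (2 * Real.pi * Complex.I / q)}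

/-!
`K ⊓ ℚ(ζ_{qm})` is a subextension of `K` that is abelian over `ℚ`, hence contained in the fixed
field `K'` of the commutator subgroup; conversely `K' ⊆ ℚ(ζ_m) ⊆ ℚ(ζ_{qm})`. The degree formula is
the natural-irrationalities theorem for the compositum of a finite Galois extension `K` with any
finite extension `L`: restriction embeds `Gal(KL/L)` into `Gal(K/ℚ)` with fixed field `K ⊓ L`, so
`[KL : L] = [K : K ⊓ L]`.
-/

open Module

namespace IntermediateField

variable {F E : Type*} [Field F] [Field E] [Algebra F E] (K L : IntermediateField F E)

theorem fixedField_range_restrictRestrictAlgEquivMapHom [Normal F K] [IsGalois L E] :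
    fixedField (restrictRestrictAlgEquivMapHom F K L E).range
      = restrict (inf_le_left : K ⊓ L ≤ K) := by
  ext x
  rw [mem_restrict, mem_inf, mem_fixedField_iff]
  simp only [MonoidHom.mem_range, forall_exists_index, forall_apply_eq_imp_iff, Subtype.ext_iff,
    restrictRestrictAlgEquivMapHom_apply]
  rw [← InfiniteGalois.mem_range_algebraMap_iff_fixed (k := L) (x : E)]
  simp

theorem finrank_mul_finrank_inf_of_sup_eq_top [IsGalois F K] [FiniteDimensional F K]
    [FiniteDimensional F E] (h : K ⊔ L = ⊤) :
    finrank F E * finrank F ↥(K ⊓ L) = finrank F K * finrank F L := by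
  have : IsGalois L E := IsGalois.sup_right K L h
  have hcard : finrank (restrict (inf_le_left : K ⊓ L ≤ K)) K = finrank L E := by
    rw [← fixedField_range_restrictRestrictAlgEquivMapHom, finrank_fixedField_eq_card,
      ← IsGalois.card_aut_eq_finrank, Nat.card_congr (MonoidHom.ofInjective
        (restrictRestrictAlgEquivMapHom_injective K L h)).toEquiv.symm]
  rw [(restrictAlgEquiv (inf_le_left : K ⊓ L ≤ K)).toLinearEquiv.finrank_eq,
    ← finrank_mul_finrank F L E,
    ← finrank_mul_finrank F (restrict (inf_le_left : K ⊓ L ≤ K)) K, hcard]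
  ring

theorem finrank_sup_mul_finrank_inf [IsGalois F K] [FiniteDimensional F K]
    [FiniteDimensional F L] :
    finrank F ↥(K ⊔ L) * finrank F ↥(K ⊓ L) = finrank F K * finrank F L := by
  set K' := K.restrict (le_sup_left : K ≤ K ⊔ L)
  set L' := L.restrict (le_sup_right : L ≤ K ⊔ L)
  have hK : lift K' = K := lift_restrict _
  have hL : lift L' = L := lift_restrict _
  have : IsGalois F K' := .of_algEquiv (restrictAlgEquiv _)
  have : FiniteDimensional F K' := (restrictAlgEquiv le_sup_left).toLinearEquiv.finiteDimensional
  have h := finrank_mul_finrank_inf_of_sup_eq_top K' L' (by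
    rw [← lift_inj, lift_top, lift_sup, hK, hL])
  have hKL : lift (K' ⊓ L') = K ⊓ L := by rw [lift_inf, hK, hL]
  rwa [(liftAlgEquiv (K' ⊓ L')).toLinearEquiv.finrank_eq, hKL,
    ← (restrictAlgEquiv le_sup_left).toLinearEquiv.finrank_eq,
    ← (restrictAlgEquiv le_sup_right).toLinearEquiv.finrank_eq] at h

theorem inf_le_lift_fixedField_commutator [IsAbelianGalois F L] :
    K ⊓ L ≤ lift (fixedField (commutator Gal(K/F))) := by
  have : IsAbelianGalois F ↥(K ⊓ L) := .of_algHom (inclusion inf_le_right)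
  have : IsAbelianGalois F (restrict (inf_le_left : K ⊓ L ≤ K)) :=
    .of_algHom (restrictAlgEquiv _).symm.toAlgHom
  rw [← lift_restrict (inf_le_left : K ⊓ L ≤ K)]
  refine map_mono _ ?_
  rw [le_iff_le, ← restrictNormalHom_ker, commutator_def, Subgroup.commutator_le]
  intro σ _ τ _
  rw [MonoidHom.mem_ker, map_commutatorElement, commutatorElement_eq_one_iff_mul_comm]
  exact mul_comm' _ _

end IntermediateField

section cycloField

variable (n : ℕ) [NeZero n]

instance : IsCyclotomicExtension {n} ℚ (cycloField n) := by
  have hζ := Complex.isPrimitiveRoot_exp n (NeZero.ne n)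
  have := hζ.adjoin_isCyclotomicExtension ℚ
  exact IsCyclotomicExtension.equiv {n} ℚ _ (Subalgebra.equivOfEq _ _
    (adjoin_simple_toSubalgebra_of_isAlgebraic
      ((hζ.isIntegral (NeZero.pos n)).tower_top (A := ℚ)).isAlgebraic).symm)

instance : FiniteDimensional ℚ (cycloField n) :=
  IsCyclotomicExtension.finiteDimensional {n} ℚ _

instance : IsAbelianGalois ℚ (cycloField n) :=
  IsCyclotomicExtension.isAbelianGalois {n} ℚ _

theorem finrank_cycloField : finrank ℚ (cycloField n) = n.totient :=
  IsCyclotomicExtension.finrank _ (Polynomial.cyclotomic.irreducible_rat (NeZero.pos n))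

end cycloField

theorem cycloField_le_of_dvd {d n : ℕ} (hn : n ≠ 0) (h : d ∣ n) :
    cycloField d ≤ cycloField n := by
  obtain ⟨k, rfl⟩ := h
  have hk : (k : ℂ) ≠ 0 := by exact_mod_cast right_ne_zero_of_mul hn
  have hd : (d : ℂ) ≠ 0 := by exact_mod_cast left_ne_zero_of_mul hn
  have hpow : Complex.exp (2 * Real.pi * Complex.I / d)
      = Complex.exp (2 * Real.pi * Complex.I / (d * k : ℕ)) ^ k := by
    rw [← Complex.exp_nat_mul]
    congr 1
    push_cast
    field_simp
  rw [cycloField, adjoin_simple_le_iff, hpow]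
  exact pow_mem (mem_adjoin_simple_self ℚ _) k

/-- Let `K/ℚ` be finite Galois with group `G`, let `K'` be the fixed
field of the commutator subgroup `G'`, and suppose `K' ⊆ ℚ(ζ_m)`.  Then for every
positive integer `q`, `K ∩ ℚ(ζ_{qm}) = K'` and
`[K(ζ_{qm}) : ℚ]·[K' : ℚ] = φ(qm)·[K : ℚ]`. -/
theorem stmt11 (K : IntermediateField ℚ ℂ) [FiniteDimensional ℚ K] [IsGalois ℚ K]
    (m : ℕ) (hm : 0 < m)
    (hsub : IntermediateField.lift
        (IntermediateField.fixedField (commutator (↥K ≃ₐ[ℚ] ↥K))) ≤ cycloField m) :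
    ∀ q : ℕ, 0 < q →
      K ⊓ cycloField (q * m)
          = IntermediateField.lift
              (IntermediateField.fixedField (commutator (↥K ≃ₐ[ℚ] ↥K))) ∧
        Module.finrank ℚ ↥(K ⊔ cycloField (q * m)) *
            Module.finrank ℚ
              ↥(IntermediateField.lift
                (IntermediateField.fixedField (commutator (↥K ≃ₐ[ℚ] ↥K))))
          = Nat.totient (q * m) * Module.finrank ℚ ↥K := by
  intro q hq
  -- `Algebra ℚ ↥K` is synthesized as `DivisionRing.toRatAlgebra` here but as
  -- `IntermediateField.algebra'` in the general lemmas; the two agree only up to unfolding.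
  have : @IsGalois ℚ _ K _ (algebra' K) := ‹IsGalois ℚ K›
  have : NeZero (q * m) := ⟨(Nat.mul_pos hq hm).ne'⟩
  have : @IsAbelianGalois ℚ (cycloField (q * m)) _ _ (algebra' _) :=
    inferInstanceAs (IsAbelianGalois ℚ (cycloField (q * m)))
  have hinf : K ⊓ cycloField (q * m) = lift (fixedField (commutator (↥K ≃ₐ[ℚ] ↥K))) :=
    le_antisymm (inf_le_lift_fixedField_commutator K _) <| le_inf (lift_le _) <|
      hsub.trans (cycloField_le_of_dvd (NeZero.ne _) (dvd_mul_left m q))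
  refine ⟨hinf, ?_⟩
  rw [← hinf, finrank_sup_mul_finrank_inf, finrank_cycloField, mul_comm]
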